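/- arXiv:2212.06594 — 6 statements merged into one kernel-verified Lean document; each statement's English description precedes it below -/
import Mathlib

section
/- Let Γ be the attractor of an iterated function system {s_1,...,s_M} of contracting similarities on ℝⁿ (so Γ is the unique nonempty compact set with Γ = ⋃ₘ sₘ(Γ)). Then the sets Γ₁ = s₁(Γ), ..., Γ_M = s_M(Γ) are pairwise disjoint if and only if there exists a nonempty bounded open set O ⊂ ℝⁿ with Γ ⊂ O such that ⋃ₘ sₘ(O) ⊂ O and sₘ(O) ∩ s_{m'}(O) = ∅ for m ≠ m'. -/
open Set Bornology

/-!
If the pieces `sₘ(Γ)` are pairwise disjoint, they are compact and hence have pairwise disjoint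
`δ`-thickenings for some `δ > 0`. Since each `sₘ` is non-expanding, `sₘ` maps the `δ`-thickening
`O` of `Γ` into the `δ`-thickening of `sₘ(Γ) ⊆ Γ`, which gives both the invariance of `O` and
the disjointness of the `sₘ(O)`. Conversely, disjointness of the `sₘ(O)` passes to the
subsets `sₘ(Γ)`.
-/

open Filter Function Metric Topology

theorem LipschitzWith.image_thickening_subset {X Y : Type*} [PseudoMetricSpace X]
    [PseudoMetricSpace Y] {f : X → Y} (hf : LipschitzWith 1 f) (δ : ℝ)
    (E : Set X) : f '' thickening δ E ⊆ thickening δ (f '' E) := by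
  rintro _ ⟨x, hx, rfl⟩
  obtain ⟨z, hz, hxz⟩ := mem_thickening_iff.1 hx
  refine mem_thickening_iff.2 ⟨f z, mem_image_of_mem f hz, ?_⟩
  calc dist (f x) (f z) ≤ 1 * dist x z := by exact_mod_cast hf.dist_le_mul x z
    _ < δ := by rwa [one_mul]

theorem eventually_pairwise_disjoint_thickening {X ι : Type*} [MetricSpace X] [Finite ι]
    {K : ι → Set X} (hK : ∀ i, IsCompact (K i)) (hdisj : Pairwise (Disjoint on K)) :
    ∀ᶠ δ in 𝓝[>] (0 : ℝ), Pairwise (Disjoint on fun i => thickening δ (K i)) := by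
  refine eventually_all.2 fun i => eventually_all.2 fun j => ?_
  by_cases hij : i = j
  · exact Eventually.of_forall fun _ h => absurd hij h
  obtain ⟨δ, hδ, hsep⟩ := (hdisj hij).exists_thickenings (hK i) (hK j).isClosed
  filter_upwards [Ioo_mem_nhdsGT hδ] with ε hε _
  exact hsep.mono (thickening_mono hε.2.le _) (thickening_mono hε.2.le _)

theorem stmt_0_general {n M : ℕ}
    (s : Fin M → EuclideanSpace ℝ (Fin n) → EuclideanSpace ℝ (Fin n))
    (ρ : Fin M → ℝ) (hρ : ∀ m, ρ m ∈ Set.Ioo (0 : ℝ) 1)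
    (hsim : ∀ m x y, dist (s m x) (s m y) = ρ m * dist x y)
    (Γ : Set (EuclideanSpace ℝ (Fin n)))
    (hΓne : Γ.Nonempty) (hΓc : IsCompact Γ)
    (hfix : Γ = ⋃ m, s m '' Γ) :
    (Pairwise fun m m' => Disjoint (s m '' Γ) (s m' '' Γ)) ↔
      ∃ O : Set (EuclideanSpace ℝ (Fin n)), O.Nonempty ∧ IsOpen O ∧ IsBounded O ∧
        Γ ⊆ O ∧ (⋃ m, s m '' O) ⊆ O ∧
        Pairwise fun m m' => Disjoint (s m '' O) (s m' '' O) := by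
  have hlip : ∀ m, LipschitzWith 1 (s m) := fun m => LipschitzWith.of_dist_le_mul fun x y => by
    rw [hsim, NNReal.coe_one]
    exact mul_le_mul_of_nonneg_right (hρ m).2.le dist_nonneg
  have hpiece : ∀ m, s m '' Γ ⊆ Γ := fun m =>
    (subset_iUnion (fun m => s m '' Γ) m).trans hfix.superset
  constructor
  · intro hdisj
    obtain ⟨δ, hδdisj, hδ⟩ := ((eventually_pairwise_disjoint_thickening
      (fun m => hΓc.image (hlip m).continuous) hdisj).and self_mem_nhdsWithin).exists
    have hmaps : ∀ m, s m '' thickening δ Γ ⊆ thickening δ (s m '' Γ) := fun m =>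
      (hlip m).image_thickening_subset δ Γ
    refine ⟨thickening δ Γ, hΓne.mono (self_subset_thickening hδ Γ), isOpen_thickening,
      hΓc.isBounded.thickening, self_subset_thickening hδ Γ,
      iUnion_subset fun m => (hmaps m).trans (thickening_subset_of_subset δ (hpiece m)),
      fun m m' h => (hδdisj h).mono (hmaps m) (hmaps m')⟩
  · rintro ⟨O, -, -, -, hΓO, -, hOdisj⟩ m m' hmm'
    exact (hOdisj hmm').mono (image_mono hΓO) (image_mono hΓO)

/-- For the attractor Γ of an IFS of contracting similarities,
the pieces s_m(Γ) are pairwise disjoint iff the open set condition holds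
for some nonempty bounded open set O containing Γ. -/
theorem stmt_0 {n M : ℕ} (hM : 2 ≤ M)
    (s : Fin M → EuclideanSpace ℝ (Fin n) → EuclideanSpace ℝ (Fin n))
    (ρ : Fin M → ℝ) (hρ : ∀ m, ρ m ∈ Set.Ioo (0 : ℝ) 1)
    (hsim : ∀ m x y, dist (s m x) (s m y) = ρ m * dist x y)
    (Γ : Set (EuclideanSpace ℝ (Fin n)))
    (hΓne : Γ.Nonempty) (hΓc : IsCompact Γ)
    (hfix : Γ = ⋃ m, s m '' Γ) :
    (Pairwise fun m m' => Disjoint (s m '' Γ) (s m' '' Γ)) ↔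
      ∃ O : Set (EuclideanSpace ℝ (Fin n)), O.Nonempty ∧ IsOpen O ∧ IsBounded O ∧
        Γ ⊆ O ∧ (⋃ m, s m '' O) ⊆ O ∧
        Pairwise fun m m' => Disjoint (s m '' O) (s m' '' O) :=
  stmt_0_general s ρ hρ hsim Γ hΓne hΓc hfix
end

section
/- Let s₁,...,s_M be contracting similarities on ℝⁿ with ratios ρₘ, satisfying the open set condition for a bounded open set O. If ∑ₘ ρₘⁿ = 1 (i.e. the similarity dimension equals n), then s(closure O) = closure O, where s(E) = ⋃ₘ sₘ(E), and consequently Γ = closure(O), where Γ is the attractor. -/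
/-!
A similarity of ratio ρ of a Euclidean space is `x ↦ c + ρ • L x` with `L` a linear isometry,
so it scales Lebesgue measure by `ρ ^ n`. Under the open set condition and `∑ ρₘ ^ n = 1` the
open set `s(O) ⊆ O` therefore has the full measure of `O`, so it is dense in `O`, and
`s(closure O) = closure (s O) = closure O`. Both `Γ` and `closure O` are then nonempty bounded
closed fixed sets of `s`, which contracts the Hausdorff distance, so they coincide.
-/

open Set Bornology MeasureTheory EMetric Metric
open scoped NNReal ENNReal Pointwise

section Similarity

variable {E : Type*} [NormedAddCommGroup E] [InnerProductSpace ℝ E] [FiniteDimensional ℝ E]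
  {f : E → E} {ρ : ℝ}

theorem exists_linearIsometryEquiv_of_dist_eq_mul (hρ : 0 < ρ)
    (hf : ∀ x y, dist (f x) (f y) = ρ * dist x y) :
    ∃ L : E ≃ₗᵢ[ℝ] E, ∀ x, f x = f 0 + ρ • L x := by
  have hg : Isometry fun x => ρ⁻¹ • (f x - f 0) := by
    refine Isometry.of_dist_eq fun x y => ?_
    rw [dist_smul₀, dist_sub_right, hf, Real.norm_eq_abs, abs_of_pos (inv_pos.2 hρ),
      inv_mul_cancel_left₀ hρ.ne']
  let g := hg.affineIsometryOfStrictConvexSpace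
  refine ⟨g.linearIsometry.toLinearIsometryEquiv rfl, fun x => ?_⟩
  have hL : g.linearIsometry x = ρ⁻¹ • (f x - f 0) := by
    simpa [g] using g.toAffineMap.linearMap_vsub x 0
  rw [LinearIsometry.toLinearIsometryEquiv_apply, hL, smul_inv_smul₀ hρ.ne', add_sub_cancel]

theorem exists_homeomorph_of_dist_eq_mul (hρ : 0 < ρ)
    (hf : ∀ x y, dist (f x) (f y) = ρ * dist x y) : ∃ h : E ≃ₜ E, ⇑h = f := by
  obtain ⟨L, hL⟩ := exists_linearIsometryEquiv_of_dist_eq_mul hρ hf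
  refine ⟨(L.toHomeomorph.trans (Homeomorph.smulOfNeZero ρ hρ.ne')).trans
    (Homeomorph.addLeft (f 0)), funext fun x => ?_⟩
  simp [hL x, Homeomorph.smulOfNeZero]

variable [MeasurableSpace E] [BorelSpace E]

theorem volume_image_of_dist_eq_mul (hρ : 0 < ρ)
    (hf : ∀ x y, dist (f x) (f y) = ρ * dist x y) (A : Set E) :
    volume (f '' A) = ENNReal.ofReal (ρ ^ Module.finrank ℝ E) * volume A := by
  obtain ⟨L, hL⟩ := exists_linearIsometryEquiv_of_dist_eq_mul hρ hf
  have hLA : volume (L '' A) = volume A := by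
    rw [L.image_eq_preimage_symm, ← L.symm.coe_toMeasurableEquiv,
      L.symm.measurePreserving.measure_preimage_equiv]
  have hfA : f '' A = (f 0 + ·) '' (ρ • L '' A) := by
    rw [← image_smul, image_image, image_image]
    exact image_congr fun x _ => hL x
  rw [hfA, image_add_left, measure_preimage_add, Measure.addHaar_smul, hLA,
    abs_of_pos (pow_pos hρ _)]

end Similarity

theorem subset_closure_of_measure_eq {X : Type*} [TopologicalSpace X] [MeasurableSpace X]
    {μ : Measure X} [μ.IsOpenPosMeasure] {U O : Set X} (hUO : U ⊆ O)
    (hU : NullMeasurableSet U μ) (hO : IsOpen O) (hO_fin : μ O ≠ ∞) (hμ : μ U = μ O) :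
    O ⊆ closure U := by
  have hnull : μ (O \ U) = 0 := by rw [measure_sdiff hUO hU (hμ ▸ hO_fin), hμ, tsub_self]
  have : O \ closure U = ∅ :=
    ((hO.sdiff isClosed_closure).measure_eq_zero_iff μ).1
      (measure_mono_null (sdiff_subset_sdiff_right subset_closure) hnull)
  exact sdiff_eq_empty.1 this

theorem iUnion_image_closure_eq_closure_of_sum_pow_finrank_eq_one
    {E : Type*} [NormedAddCommGroup E] [InnerProductSpace ℝ E] [FiniteDimensional ℝ E]
    [MeasurableSpace E] [BorelSpace E] {ι : Type*} [Fintype ι] {s : ι → E → E} {ρ : ι → ℝ}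
    (hρ : ∀ i, 0 < ρ i) (hs : ∀ i x y, dist (s i x) (s i y) = ρ i * dist x y)
    {O : Set E} (hO : IsOpen O) (hO_bdd : IsBounded O) (hsO : ⋃ i, s i '' O ⊆ O)
    (hdisj : Pairwise fun i j => Disjoint (s i '' O) (s j '' O))
    (hsum : ∑ i, ρ i ^ Module.finrank ℝ E = 1) :
    ⋃ i, s i '' closure O = closure O := by
  choose h hh using fun i => exists_homeomorph_of_dist_eq_mul (hρ i) (hs i)
  have hopen (i : ι) : IsOpen (s i '' O) := hh i ▸ (h i).isOpenMap O hO
  have hvol : volume (⋃ i, s i '' O) = volume O := by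
    rw [measure_iUnion hdisj fun i => (hopen i).measurableSet, tsum_fintype]
    simp only [volume_image_of_dist_eq_mul (hρ _) (hs _)]
    rw [← Finset.sum_mul, ← ENNReal.ofReal_sum_of_nonneg fun i _ => (pow_pos (hρ i) _).le,
      hsum, ENNReal.ofReal_one, one_mul]
  have hclosure : closure (⋃ i, s i '' O) = ⋃ i, s i '' closure O := by
    rw [closure_iUnion_of_finite]
    exact iUnion_congr fun i => by rw [← hh i, (h i).image_closure]
  rw [← hclosure]
  exact (closure_mono hsO).antisymm <| closure_minimal
    (subset_closure_of_measure_eq hsO (isOpen_iUnion hopen).nullMeasurableSet hO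
      hO_bdd.measure_lt_top.ne hvol) isClosed_closure

section Contraction

variable {X : Type*} {K : ℝ≥0}

theorem LipschitzWith.infEDist_image_le [PseudoEMetricSpace X] {f : X → X}
    (hf : LipschitzWith K f) (hK : K ≠ 0) (x : X) (A : Set X) :
    infEDist (f x) (f '' A) ≤ K * infEDist x A :=
  calc infEDist (f x) (f '' A) ≤ ⨅ y ∈ A, edist (f x) (f y) :=
        le_iInf₂ fun _ hy => infEDist_le_edist_of_mem (mem_image_of_mem f hy)
    _ ≤ ⨅ y ∈ A, K * edist x y := iInf₂_mono fun y _ => hf x y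
    _ = K * infEDist x A := by
        simp only [infEDist, ENNReal.mul_iInf_of_ne (ENNReal.coe_ne_zero.2 hK)
          ENNReal.coe_ne_top]

theorem hausdorffEDist_iUnion_image_le [PseudoEMetricSpace X] {ι : Type*} {f : ι → X → X}
    (hf : ∀ i, LipschitzWith K (f i)) (hK : K ≠ 0) (A B : Set X) :
    hausdorffEDist (⋃ i, f i '' A) (⋃ i, f i '' B) ≤ K * hausdorffEDist A B := by
  have key (A B : Set X) : ∀ x ∈ ⋃ i, f i '' A,
      infEDist x (⋃ i, f i '' B) ≤ K * hausdorffEDist A B := by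
    simp only [mem_iUnion, mem_image]
    rintro _ ⟨i, a, ha, rfl⟩
    calc infEDist (f i a) (⋃ i, f i '' B) ≤ infEDist (f i a) (f i '' B) :=
          infEDist_anti (subset_iUnion (fun i => f i '' B) i)
      _ ≤ K * infEDist a B := (hf i).infEDist_image_le hK a B
      _ ≤ K * hausdorffEDist A B := by gcongr; exact infEDist_le_hausdorffEDist_of_mem ha
  refine hausdorffEDist_le_of_infEDist (key A B) fun x hx => ?_
  rw [hausdorffEDist_comm]
  exact key B A x hx

theorem eq_of_iUnion_image_eq_of_lipschitzWith [EMetricSpace X] {ι : Type*}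
    {f : ι → X → X} (hf : ∀ i, LipschitzWith K (f i)) (hK₀ : K ≠ 0) (hK₁ : K < 1)
    {A B : Set X} (hA : IsClosed A) (hB : IsClosed B) (hAB : hausdorffEDist A B ≠ ∞)
    (hfA : ⋃ i, f i '' A = A) (hfB : ⋃ i, f i '' B = B) : A = B := by
  have hcontract : hausdorffEDist A B ≤ K * hausdorffEDist A B := by
    simpa only [hfA, hfB] using hausdorffEDist_iUnion_image_le hf hK₀ A B
  have hzero : hausdorffEDist A B = 0 := by
    by_contra hne
    have : (K : ℝ≥0∞) * hausdorffEDist A B < 1 * hausdorffEDist A B :=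
      ENNReal.mul_lt_mul_left hne hAB (by exact_mod_cast hK₁)
    exact (one_mul (hausdorffEDist A B) ▸ this).not_ge hcontract
  rwa [hausdorffEDist_zero_iff_closure_eq_closure, hA.closure_eq, hB.closure_eq] at hzero

end Contraction

theorem stmt_2_general {n M : ℕ}
    (s : Fin M → EuclideanSpace ℝ (Fin n) → EuclideanSpace ℝ (Fin n))
    (ρ : Fin M → ℝ) (hρ : ∀ m, ρ m ∈ Set.Ioo (0 : ℝ) 1)
    (hsim : ∀ m x y, dist (s m x) (s m y) = ρ m * dist x y)
    (O : Set (EuclideanSpace ℝ (Fin n)))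
    (hOne : O.Nonempty) (hOopen : IsOpen O) (hObdd : IsBounded O)
    (hOSC1 : (⋃ m, s m '' O) ⊆ O)
    (hOSC2 : Pairwise fun m m' => Disjoint (s m '' O) (s m' '' O))
    (Γ : Set (EuclideanSpace ℝ (Fin n)))
    (hΓne : Γ.Nonempty) (hΓc : IsCompact Γ)
    (hfix : Γ = ⋃ m, s m '' Γ)
    (hsum : ∑ m, ρ m ^ (n : ℝ) = 1) :
    (⋃ m, s m '' closure O) = closure O ∧ Γ = closure O := by
  have hfill : ⋃ m, s m '' closure O = closure O :=
    iUnion_image_closure_eq_closure_of_sum_pow_finrank_eq_one (fun m => (hρ m).1) hsim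
      hOopen hObdd hOSC1 hOSC2 (by simpa [finrank_euclideanSpace_fin] using hsum)
  refine ⟨hfill, ?_⟩
  obtain ⟨K, hK₀, hK₁, hρK⟩ : ∃ K : ℝ≥0, 0 < K ∧ K < 1 ∧ ∀ m, ρ m ≤ K := by
    obtain ⟨K, hsupK, hK₁⟩ := exists_between <| (Finset.sup_lt_iff zero_lt_one).2 fun m _ =>
      Real.toNNReal_lt_one.2 (hρ m).2
    exact ⟨K, pos_of_gt hsupK, hK₁, fun m =>
      Real.toNNReal_le_iff_le_coe.1 ((Finset.le_sup (Finset.mem_univ m)).trans hsupK.le)⟩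
  have hlip (m : Fin M) : LipschitzWith K (s m) :=
    LipschitzWith.of_dist_le_mul fun x y => (hsim m x y).trans_le (by gcongr; exact hρK m)
  exact eq_of_iUnion_image_eq_of_lipschitzWith hlip hK₀.ne' hK₁ hΓc.isClosed
    isClosed_closure (hausdorffEDist_ne_top_of_nonempty_of_bounded hΓne hOne.closure
      hΓc.isBounded hObdd.closure) hfix.symm hfill

/-- If the IFS satisfies the open set condition with bounded open O and the
similarity dimension equals n (∑ ρₘⁿ = 1), then s(closure O) = closure O and the
attractor Γ equals closure O. -/
theorem stmt_2 {n M : ℕ} (hM : 2 ≤ M)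
    (s : Fin M → EuclideanSpace ℝ (Fin n) → EuclideanSpace ℝ (Fin n))
    (ρ : Fin M → ℝ) (hρ : ∀ m, ρ m ∈ Set.Ioo (0 : ℝ) 1)
    (hsim : ∀ m x y, dist (s m x) (s m y) = ρ m * dist x y)
    (O : Set (EuclideanSpace ℝ (Fin n)))
    (hOne : O.Nonempty) (hOopen : IsOpen O) (hObdd : IsBounded O)
    (hOSC1 : (⋃ m, s m '' O) ⊆ O)
    (hOSC2 : Pairwise fun m m' => Disjoint (s m '' O) (s m' '' O))
    (Γ : Set (EuclideanSpace ℝ (Fin n)))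
    (hΓne : Γ.Nonempty) (hΓc : IsCompact Γ)
    (hfix : Γ = ⋃ m, s m '' Γ)
    (hsum : ∑ m, ρ m ^ (n : ℝ) = 1) :
    (⋃ m, s m '' closure O) = closure O ∧ Γ = closure O :=
  stmt_2_general s ρ hρ hsim O hOne hOopen hObdd hOSC1 hOSC2 Γ hΓne hΓc hfix hsum
end

section
/- Let Γ be the attractor of an IFS of contracting similarities on ℝⁿ satisfying the open set condition, with similarity dimension d solving ∑ₘ ρₘ^d = 1. If the pieces Γ₁,...,Γ_M are pairwise disjoint, then 0 < d < n. -/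
/-!
If the pieces `sₘ(Γ)` are pairwise disjoint, then for small `δ` the `δ`-neighbourhood `U` of `Γ`
is mapped by the `sₘ` onto pairwise disjoint subsets of `U`, and `sₘ` multiplies the
`n`-dimensional Hausdorff measure by `ρₘⁿ`. Moreover every `sₘ(U)` lies within distance
`(max ρₘ) δ` of `Γ`, so the nonempty open shell of points at distance between `(max ρₘ) δ` and
`δ` from `Γ` is missed, and `∑ ρₘⁿ < 1 = ∑ ρₘ^d`. As `t ↦ ∑ ρₘ^t` is decreasing, `d < n`;
and `d > 0` because there are at least two pieces.
-/

open Set Bornology Metric MeasureTheory Filter Topology Function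
open scoped NNReal ENNReal

theorem pos_of_sum_rpow_eq_one {ι : Type*} [Fintype ι] [Nontrivial ι] {ρ : ι → ℝ}
    (hρ : ∀ i, ρ i ∈ Ioc 0 1) {d : ℝ} (hsum : ∑ i, ρ i ^ d = 1) : 0 < d := by
  by_contra! hd
  have hcard : (1 : ℝ) < Fintype.card ι := by exact_mod_cast Fintype.one_lt_card
  have hle : (Fintype.card ι : ℝ) ≤ ∑ i, ρ i ^ d := by
    simpa using Finset.sum_le_sum fun i (_ : i ∈ Finset.univ) ↦
      Real.one_le_rpow_of_pos_of_le_one_of_nonpos (hρ i).1 (hρ i).2 hd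
  linarith

theorem lt_of_sum_rpow_eq_one_of_sum_rpow_lt_one {ι : Type*} [Fintype ι] {ρ : ι → ℝ}
    (hρ : ∀ i, ρ i ∈ Ioc 0 1) {d e : ℝ} (hd : ∑ i, ρ i ^ d = 1) (he : ∑ i, ρ i ^ e < 1) :
    d < e := by
  by_contra! hed
  have : ∑ i, ρ i ^ d ≤ ∑ i, ρ i ^ e := Finset.sum_le_sum fun i _ ↦
    Real.rpow_le_rpow_of_exponent_ge (hρ i).1 (hρ i).2 hed
  linarith

theorem nontrivial_of_pairwise_disjoint {ι X : Type*} [Nontrivial ι] {A : ι → Set X}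
    (hne : ∀ i, (A i).Nonempty) (hdisj : Pairwise (Disjoint on A)) : Nontrivial X := by
  obtain ⟨i, j, hij⟩ := exists_pair_ne ι
  obtain ⟨x, hx⟩ := hne i
  obtain ⟨y, hy⟩ := hne j
  exact ⟨x, y, fun hxy ↦ disjoint_left.mp (hdisj hij) hx (hxy ▸ hy)⟩

theorem exists_pos_pairwise_disjoint_thickening {ι X : Type*} [Finite ι] [EMetricSpace X]
    {K : ι → Set X} (hK : ∀ i, IsCompact (K i)) (hdisj : Pairwise (Disjoint on K)) :
    ∃ δ > 0, Pairwise (Disjoint on fun i ↦ thickening δ (K i)) := by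
  have hev : ∀ i j, ∀ᶠ δ in 𝓝[>] (0 : ℝ),
      i ≠ j → Disjoint (thickening δ (K i)) (thickening δ (K j)) := by
    intro i j
    by_cases hij : i = j
    · exact Eventually.of_forall fun _ h ↦ absurd hij h
    obtain ⟨δ, hδ, hδdisj⟩ := (hdisj hij).exists_thickenings (hK i) (hK j).isClosed
    filter_upwards [Ioo_mem_nhdsGT hδ] with ε hε _
    exact hδdisj.mono (thickening_mono hε.2.le _) (thickening_mono hε.2.le _)
  simp only [← eventually_all] at hev
  exact ((hev.and self_mem_nhdsWithin).exists).imp fun δ h ↦ ⟨h.2, fun i j ↦ h.1 i j⟩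

theorem image_thickening_subset_of_dist_eq {X Y : Type*} [PseudoMetricSpace X]
    [PseudoMetricSpace Y] {f : X → Y} {r : ℝ} (hr : 0 < r)
    (hf : ∀ x y, dist (f x) (f y) = r * dist x y) (δ : ℝ) (K : Set X) :
    f '' thickening δ K ⊆ thickening (r * δ) (f '' K) := by
  rintro _ ⟨x, hx, rfl⟩
  obtain ⟨z, hz, hxz⟩ := mem_thickening_iff.mp hx
  exact mem_thickening_iff.mpr ⟨f z, mem_image_of_mem f hz, by
    rw [hf]; exact mul_lt_mul_of_pos_left hxz hr⟩

theorem injective_of_dist_eq_mul {X Y : Type*} [MetricSpace X] [PseudoMetricSpace Y]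
    {f : X → Y} {r : ℝ} (hr : 0 < r) (hf : ∀ x y, dist (f x) (f y) = r * dist x y) :
    Injective f := fun x y hxy ↦ by
  have := hf x y
  rw [hxy, dist_self, eq_comm, mul_eq_zero] at this
  exact dist_eq_zero.mp (this.resolve_left hr.ne')

theorem hausdorffMeasure_image_of_dist_eq {X Y : Type*} [MetricSpace X] [MeasurableSpace X]
    [BorelSpace X] [MetricSpace Y] [MeasurableSpace Y] [BorelSpace Y] {f : X → Y} {r : ℝ}
    (hr : 0 < r) (hf : ∀ x y, dist (f x) (f y) = r * dist x y) {d : ℝ} (hd : 0 ≤ d)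
    (s : Set X) : μH[d] (f '' s) = ENNReal.ofReal (r ^ d) * μH[d] s := by
  lift r to ℝ≥0 using hr.le
  have hr0 : r ≠ 0 := by exact_mod_cast hr.ne'
  have hlip : LipschitzWith r f := .of_dist_le_mul fun x y ↦ (hf x y).le
  have hanti : AntilipschitzWith r⁻¹ f := .of_le_mul_dist fun x y ↦ by
    rw [hf, ← mul_assoc, NNReal.coe_inv, inv_mul_cancel₀ (by exact_mod_cast hr0), one_mul]
  rw [← ENNReal.ofReal_rpow_of_pos hr, ENNReal.ofReal_coe_nnreal]
  refine le_antisymm (hlip.hausdorffMeasure_image_le hd s) ?_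
  have := hanti.le_hausdorffMeasure_image hd s
  rw [ENNReal.coe_inv hr0, ENNReal.inv_rpow] at this
  rwa [← ENNReal.inv_mul_le_iff, inv_inv] at this
  all_goals simp [hr0]

theorem exists_infDist_eq {E : Type*} [NormedAddCommGroup E] [NormedSpace ℝ E] [Nontrivial E]
    {K : Set E} (hK : IsBounded K) (hne : K.Nonempty) {c : ℝ} (hc : 0 ≤ c) :
    ∃ x, infDist x K = c := by
  obtain ⟨k, hk⟩ := hne
  obtain ⟨x, hx⟩ : ∃ x, x ∉ thickening c K := by
    by_contra! h
    exact NormedSpace.unbounded_univ ℝ E (hK.thickening.subset fun x _ ↦ h x)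
  rw [mem_thickening_iff_infDist_lt ⟨k, hk⟩, not_lt] at hx
  exact intermediate_value_univ k x (continuous_infDist_pt K) ⟨infDist_zero_of_mem hk ▸ hc, hx⟩

theorem sum_lt_one_of_iUnion_subset_diff {X ι : Type*} [MeasurableSpace X] [Fintype ι]
    {μ : Measure X} {W : ι → Set X} {U V : Set X} {c : ι → ℝ≥0∞}
    (hW : ∀ i, μ (W i) = c i * μ U) (hWm : ∀ i, MeasurableSet (W i))
    (hWd : Pairwise (Disjoint on W)) (hWU : ⋃ i, W i ⊆ U \ V) (hVU : V ⊆ U)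
    (hVm : MeasurableSet V) (hV : μ V ≠ 0) (hU : μ U ≠ ∞) : ∑ i, c i < 1 := by
  have hU0 : μ U ≠ 0 := fun h ↦ hV (measure_mono_null hVU h)
  refine lt_of_mul_lt_mul_right' (a := μ U) ?_
  calc (∑ i, c i) * μ U = μ (⋃ i, W i) := by
        rw [measure_iUnion hWd hWm, tsum_fintype, Finset.sum_mul]; simp only [hW]
    _ ≤ μ (U \ V) := measure_mono hWU
    _ = μ U - μ V := measure_sdiff hVU hVm.nullMeasurableSet (measure_ne_top_of_subset hVU hU)
    _ < μ U := ENNReal.sub_lt_self hU hU0 hV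
    _ = 1 * μ U := (one_mul _).symm

theorem sum_rpow_finrank_lt_one_of_pairwise_disjoint {ι E : Type*} [Fintype ι]
    [NormedAddCommGroup E] [NormedSpace ℝ E] [FiniteDimensional ℝ E] [Nontrivial E]
    [MeasurableSpace E] [BorelSpace E] {s : ι → E → E} {ρ : ι → ℝ}
    (hρ : ∀ i, ρ i ∈ Ioo 0 1) (hsim : ∀ i x y, dist (s i x) (s i y) = ρ i * dist x y)
    {Γ : Set E} (hΓne : Γ.Nonempty) (hΓc : IsCompact Γ) (hsub : ∀ i, s i '' Γ ⊆ Γ)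
    (hdisj : Pairwise (Disjoint on fun i ↦ s i '' Γ)) :
    ∑ i, ρ i ^ (Module.finrank ℝ E : ℝ) < 1 := by
  rcases isEmpty_or_nonempty ι with hι | hι
  · simp
  have hlip : ∀ i, LipschitzWith (ρ i).toNNReal (s i) := fun i ↦
    .of_dist_le_mul fun x y ↦ by rw [hsim, Real.coe_toNNReal _ (hρ i).1.le]
  obtain ⟨δ, hδ, hδdisj⟩ := exists_pos_pairwise_disjoint_thickening
    (fun i ↦ hΓc.image (hlip i).continuous) hdisj
  obtain ⟨i₀, hi₀⟩ := Finite.exists_max ρ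
  have hρδ : ∀ i, ρ i * δ ≤ δ := fun i ↦ mul_le_of_le_one_left hδ.le (hρ i).2.le
  set U := thickening δ Γ
  have himage : ∀ i, s i '' U ⊆ thickening (ρ i * δ) (s i '' Γ) := fun i ↦
    image_thickening_subset_of_dist_eq (hρ i).1 (hsim i) δ Γ
  have hUdisj : Pairwise (Disjoint on fun i ↦ s i '' U) := fun i j hij ↦
    (hδdisj hij).mono ((himage i).trans (thickening_mono (hρδ i) _))
      ((himage j).trans (thickening_mono (hρδ j) _))
  have hnear : ⋃ i, s i '' U ⊆ thickening (ρ i₀ * δ) Γ := iUnion_subset fun i ↦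
    (himage i).trans <| (thickening_mono (mul_le_mul_of_nonneg_right (hi₀ i) hδ.le) _).trans
      (thickening_subset_of_subset _ (hsub i))
  set V := (infDist · Γ) ⁻¹' Ioo (ρ i₀ * δ) δ
  have hVopen : IsOpen V := isOpen_Ioo.preimage (continuous_infDist_pt Γ)
  have hVU : V ⊆ U := fun x hx ↦ (mem_thickening_iff_infDist_lt hΓne).mpr hx.2
  have hVne : V.Nonempty := by
    obtain ⟨hρ₀, hρ₁⟩ := hρ i₀
    obtain ⟨x, hx⟩ := exists_infDist_eq hΓc.isBounded hΓne (c := (ρ i₀ + 1) / 2 * δ)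
      (by positivity)
    exact ⟨x, show infDist x Γ ∈ Ioo _ _ by rw [hx]; constructor <;> nlinarith⟩
  have hmiss : ⋃ i, s i '' U ⊆ U \ V := hnear.trans fun x hx ↦
    ⟨thickening_mono (hρδ i₀) _ hx,
      fun hxV ↦ ((mem_thickening_iff_infDist_lt hΓne).mp hx).not_gt hxV.1⟩
  have hmeas : ∀ i, MeasurableSet (s i '' U) := fun i ↦
    isOpen_thickening.measurableSet.image_of_continuousOn_injOn (hlip i).continuous.continuousOn
      (injective_of_dist_eq_mul (hρ i).1 (hsim i)).injOn
  have hlt := sum_lt_one_of_iUnion_subset_diff (μ := μH[Module.finrank ℝ E])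
    (c := fun i ↦ ENNReal.ofReal (ρ i ^ (Module.finrank ℝ E : ℝ)))
    (fun i ↦ hausdorffMeasure_image_of_dist_eq (hρ i).1 (hsim i) (Nat.cast_nonneg _) U)
    hmeas hUdisj hmiss hVU hVopen.measurableSet (hVopen.measure_ne_zero _ hVne)
    hΓc.isBounded.thickening.measure_lt_top.ne
  rwa [← ENNReal.ofReal_sum_of_nonneg fun i _ ↦ (Real.rpow_pos_of_pos (hρ i).1 _).le,
    ENNReal.ofReal_lt_one] at hlt

theorem stmt_3_general {n M : ℕ} (hM : 2 ≤ M)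
    (s : Fin M → EuclideanSpace ℝ (Fin n) → EuclideanSpace ℝ (Fin n))
    (ρ : Fin M → ℝ) (hρ : ∀ m, ρ m ∈ Set.Ioo (0 : ℝ) 1)
    (hsim : ∀ m x y, dist (s m x) (s m y) = ρ m * dist x y)
    (Γ : Set (EuclideanSpace ℝ (Fin n)))
    (hΓne : Γ.Nonempty) (hΓc : IsCompact Γ)
    (hfix : Γ = ⋃ m, s m '' Γ)
    (d : ℝ) (hsum : ∑ m, ρ m ^ d = 1)
    (hdisj : Pairwise fun m m' => Disjoint (s m '' Γ) (s m' '' Γ)) :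
    0 < d ∧ d < n := by
  have : Nontrivial (Fin M) := Fin.nontrivial_iff_two_le.mpr hM
  have : Nontrivial (EuclideanSpace ℝ (Fin n)) :=
    nontrivial_of_pairwise_disjoint (fun m ↦ hΓne.image (s m)) hdisj
  have hρ' : ∀ m, ρ m ∈ Ioc 0 1 := fun m ↦ Ioo_subset_Ioc_self (hρ m)
  have hsub : ∀ m, s m '' Γ ⊆ Γ := fun m ↦ (subset_iUnion (fun m ↦ s m '' Γ) m).trans hfix.ge
  have hlt := sum_rpow_finrank_lt_one_of_pairwise_disjoint hρ hsim hΓne hΓc hsub hdisj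
  rw [finrank_euclideanSpace_fin] at hlt
  exact ⟨pos_of_sum_rpow_eq_one hρ' hsum, lt_of_sum_rpow_eq_one_of_sum_rpow_lt_one hρ' hsum hlt⟩

/-- For the attractor of an IFS of contracting similarities satisfying the
open set condition, with similarity dimension d solving ∑ ρₘ^d = 1, if the pieces
s₁(Γ),...,s_M(Γ) are pairwise disjoint then 0 < d < n. -/
theorem stmt_3 {n M : ℕ} (hM : 2 ≤ M)
    (s : Fin M → EuclideanSpace ℝ (Fin n) → EuclideanSpace ℝ (Fin n))
    (ρ : Fin M → ℝ) (hρ : ∀ m, ρ m ∈ Set.Ioo (0 : ℝ) 1)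
    (hsim : ∀ m x y, dist (s m x) (s m y) = ρ m * dist x y)
    (O : Set (EuclideanSpace ℝ (Fin n)))
    (hOne : O.Nonempty) (hOopen : IsOpen O) (hObdd : IsBounded O)
    (hOSC1 : (⋃ m, s m '' O) ⊆ O)
    (hOSC2 : Pairwise fun m m' => Disjoint (s m '' O) (s m' '' O))
    (Γ : Set (EuclideanSpace ℝ (Fin n)))
    (hΓne : Γ.Nonempty) (hΓc : IsCompact Γ)
    (hfix : Γ = ⋃ m, s m '' Γ)
    (d : ℝ) (hsum : ∑ m, ρ m ^ d = 1)
    (hdisj : Pairwise fun m m' => Disjoint (s m '' Γ) (s m' '' Γ)) :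
    0 < d ∧ d < n :=
  stmt_3_general hM s ρ hρ hsim Γ hΓne hΓc hfix d hsum hdisj
end

section
/- Let 0 < d ≤ n and let Γ ⊂ ℝⁿ be a compact d-set. Then for every x ∈ Γ, ∫_Γ |log|x−y|| dH^d(y) < ∞, and moreover the double integral ∫_Γ ∫_Γ |log|x−y|| dH^d(y) dH^d(x) < ∞. -/
/-!
Split `Γ` at distance `1` from `x`. Far from `x`, `|log |x - y|| ≤ |x - y| ≤ diam Γ`. Near `x`,
the layer-cake formula turns the integral into `∫₀^∞ μ {y | t < |log |x - y||} dt`; that set lies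
in the ball of radius `e^{-t}`, whose measure is at most `c₂ e^{-dt}` by the upper density bound.
Hence the inner integral is at most `c₂ / d + diam Γ · μ Γ` uniformly in `x ∈ Γ`, and `μ Γ` is
finite because `Γ` is covered by finitely many unit balls.
-/

open Set MeasureTheory Metric Real ENNReal

lemma Real.le_exp_neg_of_lt_abs_log {r t : ℝ} (hr0 : 0 ≤ r) (hr1 : r ≤ 1) (ht : t < |log r|) :
    r ≤ exp (-t) := by
  rcases hr0.eq_or_lt with rfl | hr
  · exact (exp_pos _).le
  rw [abs_of_nonpos (log_nonpos hr.le hr1)] at ht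
  exact ((log_lt_iff_lt_exp hr).1 (by linarith)).le

lemma Real.abs_log_le_self {r : ℝ} (hr : 1 ≤ r) : |log r| ≤ r := by
  rw [abs_of_nonneg (log_nonneg hr)]
  linarith [log_le_sub_one_of_pos (zero_lt_one.trans_le hr)]

lemma lintegral_exp_neg_mul_Ioi_zero {d : ℝ} (hd : 0 < d) :
    ∫⁻ t in Ioi 0, ENNReal.ofReal (exp (-d * t)) = ENNReal.ofReal d⁻¹ := by
  rw [← ofReal_integral_eq_lintegral_ofReal (exp_neg_integrableOn_Ioi 0 hd)
    (ae_of_all _ fun t => (exp_pos _).le), integral_exp_mul_Ioi (neg_lt_zero.2 hd)]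
  simp [neg_div_neg_eq]

variable {X : Type*} [PseudoMetricSpace X] [MeasurableSpace X] {μ : Measure X} {s : Set X}

lemma IsCompact.measure_lt_top_of_inter_closedBall {r : ℝ} (hs : IsCompact s) (hr : 0 < r)
    (h : ∀ x ∈ s, μ (s ∩ closedBall x r) < ⊤) : μ s < ⊤ :=
  hs.measure_lt_top_of_nhdsWithin fun x hx =>
    ⟨s ∩ closedBall x r, inter_mem_nhdsWithin s (closedBall_mem_nhds x hr), h x hx⟩

variable [OpensMeasurableSpace X]

lemma measurable_abs_log_dist (x : X) : Measurable fun y => |log (dist x y)| :=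
  (Real.measurable_log.comp (continuous_const.dist continuous_id).measurable).abs

lemma lintegral_abs_log_dist_inter_closedBall_le {x : X} {d : ℝ} (hd : 0 < d) {C : ℝ≥0∞}
    (h : ∀ r, 0 < r → r ≤ 1 → μ (s ∩ closedBall x r) ≤ C * ENNReal.ofReal (r ^ d)) :
    ∫⁻ y in s ∩ closedBall x 1, ENNReal.ofReal |log (dist x y)| ∂μ ≤ C * ENNReal.ofReal d⁻¹ := by
  have hlevel : ∀ t ∈ Ioi (0 : ℝ), μ.restrict (s ∩ closedBall x 1) {y | t < |log (dist x y)|} ≤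
      C * ENNReal.ofReal (exp (-d * t)) := fun t ht => by
    have hsub : {y | t < |log (dist x y)|} ∩ (s ∩ closedBall x 1) ⊆ s ∩ closedBall x (exp (-t)) :=
      fun y ⟨hty, hys, hyB⟩ => ⟨hys, mem_closedBall'.2 <|
        le_exp_neg_of_lt_abs_log dist_nonneg (mem_closedBall'.1 hyB) hty⟩
    rw [Measure.restrict_apply (measurableSet_lt measurable_const (measurable_abs_log_dist x))]
    calc _ ≤ μ (s ∩ closedBall x (exp (-t))) := measure_mono hsub
      _ ≤ C * ENNReal.ofReal (exp (-t) ^ d) :=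
        h _ (exp_pos _) (exp_le_one_iff.2 (neg_nonpos.2 (le_of_lt ht)))
      _ = C * ENNReal.ofReal (exp (-d * t)) := by rw [← Real.exp_mul]; congr 3; ring
  calc _ = ∫⁻ t in Ioi 0, μ.restrict (s ∩ closedBall x 1) {y | t < |log (dist x y)|} :=
        lintegral_eq_lintegral_meas_lt _ (ae_of_all _ fun _ => abs_nonneg _)
          (measurable_abs_log_dist x).aemeasurable
    _ ≤ ∫⁻ t in Ioi 0, C * ENNReal.ofReal (exp (-d * t)) :=
        setLIntegral_mono' measurableSet_Ioi hlevel
    _ = C * ENNReal.ofReal d⁻¹ := by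
      rw [lintegral_const_mul _ (by fun_prop), lintegral_exp_neg_mul_Ioi_zero hd]

lemma lintegral_abs_log_dist_diff_closedBall_le (hsm : MeasurableSet s)
    (hs : Bornology.IsBounded s) {x : X} (hx : x ∈ s) :
    ∫⁻ y in s \ closedBall x 1, ENNReal.ofReal |log (dist x y)| ∂μ ≤
      ENNReal.ofReal (diam s) * μ s := by
  calc _ ≤ ∫⁻ _ in s \ closedBall x 1, ENNReal.ofReal (diam s) ∂μ := by
        refine setLIntegral_mono' (hsm.diff measurableSet_closedBall) fun y ⟨hys, hyB⟩ => ?_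
        have h1 : 1 ≤ dist x y := by
          rw [mem_closedBall'] at hyB
          exact (not_le.1 hyB).le
        exact ENNReal.ofReal_le_ofReal <|
          (abs_log_le_self h1).trans (dist_le_diam_of_mem hs hx hys)
    _ ≤ _ := by rw [setLIntegral_const]; gcongr; exact sdiff_subset

lemma lintegral_abs_log_dist_le (hsm : MeasurableSet s) (hs : Bornology.IsBounded s) {x : X}
    (hx : x ∈ s) {d : ℝ} (hd : 0 < d) {C : ℝ≥0∞}
    (h : ∀ r, 0 < r → r ≤ 1 → μ (s ∩ closedBall x r) ≤ C * ENNReal.ofReal (r ^ d)) :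
    ∫⁻ y in s, ENNReal.ofReal |log (dist x y)| ∂μ ≤
      C * ENNReal.ofReal d⁻¹ + ENNReal.ofReal (diam s) * μ s := by
  rw [← lintegral_inter_add_sdiff _ s measurableSet_closedBall]
  exact add_le_add (lintegral_abs_log_dist_inter_closedBall_le hd h)
    (lintegral_abs_log_dist_diff_closedBall_le hsm hs hx)

theorem stmt_6_general {n : ℕ} (d : ℝ) (hd0 : 0 < d)
    (Γ : Set (EuclideanSpace ℝ (Fin n))) (hΓc : IsCompact Γ)
    (c₂ : ℝ)
    (hupper : ∀ x ∈ Γ, ∀ r : ℝ, 0 < r → r ≤ 1 →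
      μH[d] (Γ ∩ Metric.closedBall x r) ≤ ENNReal.ofReal (c₂ * r ^ d)) :
    (∀ x ∈ Γ, ∫⁻ y in Γ, ENNReal.ofReal |Real.log (dist x y)| ∂(μH[d]) < ⊤) ∧
      ∫⁻ x in Γ, (∫⁻ y in Γ, ENNReal.ofReal |Real.log (dist x y)| ∂(μH[d])) ∂(μH[d]) < ⊤ := by
  have hupper_mul : ∀ x ∈ Γ, ∀ r : ℝ, 0 < r → r ≤ 1 →
      μH[d] (Γ ∩ closedBall x r) ≤ ENNReal.ofReal c₂ * ENNReal.ofReal (r ^ d) :=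
    fun x hx r hr hr1 => by
      rw [← ENNReal.ofReal_mul' (rpow_nonneg hr.le d)]
      exact hupper x hx r hr hr1
  have hΓ : μH[d] Γ < ⊤ := hΓc.measure_lt_top_of_inter_closedBall one_pos fun x hx =>
    (hupper_mul x hx 1 one_pos le_rfl).trans_lt (by simp)
  set K := ENNReal.ofReal c₂ * ENNReal.ofReal d⁻¹ + ENNReal.ofReal (diam Γ) * μH[d] Γ
  have hK : K < ⊤ := by finiteness
  have hbound : ∀ x ∈ Γ, ∫⁻ y in Γ, ENNReal.ofReal |log (dist x y)| ∂(μH[d]) ≤ K := fun x hx =>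
    lintegral_abs_log_dist_le hΓc.measurableSet hΓc.isBounded hx hd0 (hupper_mul x hx)
  refine ⟨fun x hx => (hbound x hx).trans_lt hK, ?_⟩
  calc _ ≤ ∫⁻ _ in Γ, K ∂(μH[d]) := setLIntegral_mono' hΓc.measurableSet hbound
    _ = K * μH[d] Γ := setLIntegral_const _ _
    _ < ⊤ := ENNReal.mul_lt_top hK hΓ

/-- If Γ ⊂ ℝⁿ is a compact d-set, then for every x ∈ Γ the logarithmic
integral ∫_Γ |log|x−y|| dH^d(y) is finite, and the corresponding double integral over
Γ × Γ is finite as well. -/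
theorem stmt_6 {n : ℕ} (d : ℝ) (hd0 : 0 < d) (hdn : d ≤ n)
    (Γ : Set (EuclideanSpace ℝ (Fin n))) (hΓc : IsCompact Γ)
    (c₁ c₂ : ℝ) (hc₁ : 0 < c₁) (hc₁₂ : c₁ < c₂)
    (hlower : ∀ x ∈ Γ, ∀ r : ℝ, 0 < r → r ≤ 1 →
      ENNReal.ofReal (c₁ * r ^ d) ≤ μH[d] (Γ ∩ Metric.closedBall x r))
    (hupper : ∀ x ∈ Γ, ∀ r : ℝ, 0 < r → r ≤ 1 →
      μH[d] (Γ ∩ Metric.closedBall x r) ≤ ENNReal.ofReal (c₂ * r ^ d)) :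
    (∀ x ∈ Γ, ∫⁻ y in Γ, ENNReal.ofReal |Real.log (dist x y)| ∂(μH[d]) < ⊤) ∧
      ∫⁻ x in Γ, (∫⁻ y in Γ, ENNReal.ofReal |Real.log (dist x y)| ∂(μH[d])) ∂(μH[d]) < ⊤ :=
  stmt_6_general d hd0 Γ hΓc c₂ hupper
end

section
/- Let 0 < d ≤ n, let Γ ⊂ ℝⁿ be a compact d-set with constants c₁ < c₂, let x ∈ Γ, and let f : (0,∞) → [0,∞) be non-increasing and continuous. Then there exist constants C₂ > C₁ > 0, depending only on c₁, c₂, n, and diam(Γ), such that C₁ d ∫₀^{diam Γ} r^{d−1} f(r) dr ≤ ∫_Γ f(|x−y|) dH^d(y) ≤ C₂ d ∫₀^{diam Γ} r^{d−1} f(r) dr. -/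
/-!
Both integrals are integrals of the antitone function `f` against a measure on `(0, diam Γ]`:
the distribution `π` of `dist x ·` under `μH[d]` restricted to `Γ`, and `d r ^ (d - 1) dr`.
By the layer-cake formula an integral of `f` is the integral over `t > 0` of the mass of the
superlevel set `{f > t}`, and this set is an initial segment of `(0, diam Γ]`, squeezed between
`(0, ρ)` and `(0, ρ]` for `ρ` its supremum. So it suffices to compare the two measures on such
intervals, which is the d-set condition extended from radii `≤ 1` to all radii, using that `Γ`
is bounded and of finite measure: with `s = min ρ (diam Γ)`,
`π (0, ρ] ≤ μH[d] (Γ ∩ closedBall x ρ) ≲ s ^ d` and `s ^ d ≲ μH[d] (Γ ∩ ball x ρ) ≤ π (0, ρ)`.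
-/

open Set MeasureTheory Metric
open scoped ENNReal

theorem subset_Ioc_zero_sSup {S : Set ℝ} (hS : S ⊆ Ioi 0) (hb : BddAbove S) :
    S ⊆ Ioc 0 (sSup S) :=
  fun _ hr => ⟨hS hr, le_csSup hb hr⟩

theorem Ioo_zero_sSup_subset {S : Set ℝ} (hS : ∀ r ∈ S, ∀ r', 0 < r' → r' ≤ r → r' ∈ S) :
    Ioo 0 (sSup S) ⊆ S := by
  rintro r ⟨hr0, hr⟩
  rcases S.eq_empty_or_nonempty with rfl | hne
  · rw [Real.sSup_empty] at hr
    exact absurd hr0 hr.not_gt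
  obtain ⟨s, hs, hrs⟩ := exists_lt_of_lt_csSup hne hr
  exact hS s hs r hr0 hrs.le

theorem ContinuousOn.aemeasurable_of_ae_mem {f : ℝ → ℝ} {s : Set ℝ} {μ : Measure ℝ}
    (hf : ContinuousOn f s) (hs : MeasurableSet s) (hμ : ∀ᵐ x ∂μ, x ∈ s) :
    AEMeasurable f μ := by
  simpa only [Measure.restrict_eq_self_of_ae_mem hμ] using hf.aemeasurable (μ := μ) hs

theorem lintegral_ofReal_le_of_antitoneOn {π ν : Measure ℝ} {R : ℝ} {f : ℝ → ℝ}
    (hπ : ∀ᵐ r ∂π, r ∈ Ioc 0 R) (hν : ∀ᵐ r ∂ν, r ∈ Ioi 0)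
    (hf0 : ∀ r, 0 < r → 0 ≤ f r) (hfa : AntitoneOn f (Ioi 0)) (hfc : ContinuousOn f (Ioi 0))
    (h : ∀ ρ, 0 < ρ → π (Ioc 0 ρ) ≤ ν (Ioo 0 ρ)) :
    ∫⁻ r, ENNReal.ofReal (f r) ∂π ≤ ∫⁻ r, ENNReal.ofReal (f r) ∂ν := by
  have hπ' : ∀ᵐ r ∂π, r ∈ Ioi 0 := hπ.mono fun _ hr => hr.1
  rw [lintegral_eq_lintegral_meas_lt π (hπ'.mono hf0)
      (hfc.aemeasurable_of_ae_mem measurableSet_Ioi hπ'),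
    lintegral_eq_lintegral_meas_lt ν (hν.mono hf0)
      (hfc.aemeasurable_of_ae_mem measurableSet_Ioi hν)]
  refine lintegral_mono fun t => ?_
  set S := {r | t < f r} ∩ Ioc 0 R
  have hS : ∀ r ∈ S, ∀ r', 0 < r' → r' ≤ r → r' ∈ S := fun r hr r' hr' hrr' =>
    ⟨hr.1.trans_le (hfa (mem_Ioi.2 hr') (mem_Ioi.2 hr.2.1) hrr'), hr', hrr'.trans hr.2.2⟩
  have hρ : π (Ioc 0 (sSup S)) ≤ ν (Ioo 0 (sSup S)) := by
    rcases le_or_gt (sSup S) 0 with h0 | h0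
    · simp [Ioc_eq_empty h0.not_gt]
    · exact h _ h0
  calc π {r | t < f r} ≤ π S := measure_mono_ae (hπ.mono fun r hr hr' => ⟨hr', hr⟩)
    _ ≤ π (Ioc 0 (sSup S)) := measure_mono
        (subset_Ioc_zero_sSup (fun _ hr => hr.2.1) ⟨R, fun _ hr => hr.2.2⟩)
    _ ≤ ν (Ioo 0 (sSup S)) := hρ
    _ ≤ ν S := measure_mono (Ioo_zero_sSup_subset hS)
    _ ≤ ν {r | t < f r} := measure_mono inter_subset_left

noncomputable def radialMeasure (d R : ℝ) : Measure ℝ :=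
  (volume.restrict (Ioo 0 R)).withDensity fun r => ENNReal.ofReal (d * r ^ (d - 1))

section radialMeasure

variable {d R : ℝ}

theorem lintegral_Ioc_mul_rpow_sub_one (hd : 0 < d) {s : ℝ} (hs : 0 ≤ s) :
    ∫⁻ r in Ioc 0 s, ENNReal.ofReal (d * r ^ (d - 1)) = ENNReal.ofReal (s ^ d) := by
  have hd' : (-1 : ℝ) < d - 1 := by linarith
  rw [← ofReal_integral_eq_lintegral_ofReal
    ((intervalIntegral.intervalIntegrable_rpow' hd').1.const_mul d)
    ((ae_restrict_mem measurableSet_Ioc).mono fun r hr =>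
      mul_nonneg hd.le (Real.rpow_nonneg hr.1.le _)),
    ← intervalIntegral.integral_of_le hs, intervalIntegral.integral_const_mul,
    integral_rpow (Or.inl hd')]
  congr 1
  simp only [sub_add_cancel, Real.zero_rpow hd.ne', sub_zero]
  field_simp

theorem radialMeasure_apply {s : Set ℝ} (hs : MeasurableSet s) :
    radialMeasure d R s = ∫⁻ r in s ∩ Ioo 0 R, ENNReal.ofReal (d * r ^ (d - 1)) := by
  rw [radialMeasure, withDensity_apply _ hs, Measure.restrict_restrict hs]

theorem radialMeasure_Ioc_le (hd : 0 < d) (hR : 0 ≤ R) {ρ : ℝ} (hρ : 0 ≤ ρ) :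
    radialMeasure d R (Ioc 0 ρ) ≤ ENNReal.ofReal (min ρ R ^ d) := by
  rw [radialMeasure_apply measurableSet_Ioc, ← lintegral_Ioc_mul_rpow_sub_one hd (le_min hρ hR)]
  exact lintegral_mono_set fun r hr => ⟨hr.1.1, le_min hr.1.2 hr.2.2.le⟩

theorem radialMeasure_Ioo (hd : 0 < d) (hR : 0 ≤ R) {ρ : ℝ} (hρ : 0 ≤ ρ) :
    radialMeasure d R (Ioo 0 ρ) = ENNReal.ofReal (min ρ R ^ d) := by
  rw [radialMeasure_apply measurableSet_Ioo, Ioo_inter_Ioo, max_self,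
    setLIntegral_congr Ioo_ae_eq_Ioc, lintegral_Ioc_mul_rpow_sub_one hd (le_min hρ hR)]

theorem ae_radialMeasure_mem_Ioc : ∀ᵐ r ∂radialMeasure d R, r ∈ Ioc 0 R :=
  (withDensity_absolutelyContinuous _ _).ae_le
    ((ae_restrict_mem measurableSet_Ioo).mono fun _ hr => Ioo_subset_Ioc_self hr)

theorem lintegral_radialMeasure (hd : 0 ≤ d) (f : ℝ → ℝ) :
    ∫⁻ r, ENNReal.ofReal (f r) ∂radialMeasure d R =
      ENNReal.ofReal d * ∫⁻ r in Ioo 0 R, ENNReal.ofReal (r ^ (d - 1) * f r) := by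
  rw [radialMeasure, lintegral_withDensity_eq_lintegral_mul_non_measurable _
    (by fun_prop) (ae_of_all _ fun _ => ENNReal.ofReal_lt_top),
    ← lintegral_const_mul' _ _ ENNReal.ofReal_ne_top]
  refine setLIntegral_congr_fun measurableSet_Ioo fun r hr => ?_
  rw [Pi.mul_apply, ← ENNReal.ofReal_mul (mul_nonneg hd (Real.rpow_nonneg hr.1.le _)),
    ← ENNReal.ofReal_mul hd, mul_assoc]

end radialMeasure

theorem hausdorffMeasure_singleton {X : Type*} [EMetricSpace X] [MeasurableSpace X]
    [BorelSpace X] {d : ℝ} (hd : 0 < d) (x : X) : μH[d] {x} = 0 := by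
  have h := hausdorffMeasure_of_dimH_lt (d := d.toNNReal) (s := {x})
    (by rw [dimH_singleton]; exact_mod_cast Real.toNNReal_pos.2 hd)
  rwa [Real.coe_toNNReal d hd.le] at h

section DSet

variable {X : Type*} [MetricSpace X] [MeasurableSpace X] {μ : Measure X}
  {Γ : Set X} {x : X} {d c₁ c₂ : ℝ}

theorem le_measure_inter_ball (hd : 0 < d)
    (hlower : ∀ r : ℝ, 0 < r → r ≤ 1 → ENNReal.ofReal (c₁ * r ^ d) ≤ μ (Γ ∩ closedBall x r))
    {ρ : ℝ} (hρ : 0 < ρ) :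
    ENNReal.ofReal (c₁ / max 2 (diam Γ) ^ d * min ρ (diam Γ) ^ d) ≤ μ (Γ ∩ ball x ρ) := by
  set s := min ρ (diam Γ)
  set M := max 2 (diam Γ)
  have hM : 2 ≤ M := le_max_left _ _
  have hs0 : 0 ≤ s := le_min hρ.le diam_nonneg
  rcases hs0.eq_or_lt with hs | hs
  · rw [← hs, Real.zero_rpow hd.ne', mul_zero, ENNReal.ofReal_zero]
    exact zero_le
  have hr : 0 < s / M := by positivity
  have hr1 : s / M ≤ 1 :=
    (div_le_one (by positivity)).2 ((min_le_right _ _).trans (le_max_right _ _))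
  have hrρ : s / M < ρ := by
    calc s / M ≤ s / 2 := div_le_div_of_nonneg_left hs.le two_pos hM
      _ < s := half_lt_self hs
      _ ≤ ρ := min_le_left _ _
  calc ENNReal.ofReal (c₁ / M ^ d * s ^ d) = ENNReal.ofReal (c₁ * (s / M) ^ d) := by
        rw [Real.div_rpow hs.le (by positivity), mul_div_assoc', div_mul_eq_mul_div]
    _ ≤ μ (Γ ∩ closedBall x (s / M)) := hlower _ hr hr1
    _ ≤ μ (Γ ∩ ball x ρ) := measure_mono (inter_subset_inter_right _ (closedBall_subset_ball hrρ))

theorem measure_inter_closedBall_le (hd : 0 < d) (hb : Bornology.IsBounded Γ) (hxΓ : x ∈ Γ)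
    (hx : μ {x} = 0) (hΓfin : μ Γ ≠ ∞)
    (hupper : ∀ r : ℝ, 0 < r → r ≤ 1 → μ (Γ ∩ closedBall x r) ≤ ENNReal.ofReal (c₂ * r ^ d))
    {ρ : ℝ} (hρ : 0 < ρ) :
    μ (Γ ∩ closedBall x ρ) ≤ ENNReal.ofReal (max c₂ (μ Γ).toReal * min ρ (diam Γ) ^ d) := by
  set s := min ρ (diam Γ)
  have hsub : Γ ∩ closedBall x ρ ⊆ Γ ∩ closedBall x s := fun y ⟨hyΓ, hyρ⟩ =>
    ⟨hyΓ, le_min hyρ (dist_le_diam_of_mem hb hyΓ hxΓ)⟩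
  refine (measure_mono hsub).trans ?_
  have hs0 : 0 ≤ s := le_min hρ.le diam_nonneg
  rcases hs0.eq_or_lt with hs | hs
  · rw [← hs, closedBall_zero]
    exact (measure_mono inter_subset_right).trans (hx.le.trans zero_le)
  rcases le_or_gt s 1 with hs1 | hs1
  · exact (hupper s hs hs1).trans (ENNReal.ofReal_le_ofReal (mul_le_mul_of_nonneg_right
      (le_max_left _ _) (Real.rpow_nonneg hs.le _)))
  · calc μ (Γ ∩ closedBall x s) ≤ μ Γ := measure_mono inter_subset_left
      _ = ENNReal.ofReal ((μ Γ).toReal * 1) := by rw [mul_one, ENNReal.ofReal_toReal hΓfin]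
      _ ≤ ENNReal.ofReal (max c₂ (μ Γ).toReal * s ^ d) :=
        ENNReal.ofReal_le_ofReal (mul_le_mul (le_max_right _ _) (Real.one_le_rpow hs1.le hd.le)
          zero_le_one (ENNReal.toReal_nonneg.trans (le_max_right _ _)))

end DSet

section DistanceDistribution

variable {X : Type*} [MetricSpace X] [MeasurableSpace X] [BorelSpace X] {μ : Measure X}
  {Γ : Set X} {x : X} {d c₁ c₂ : ℝ}

theorem map_dist_Ioc_le (ρ : ℝ) :
    (μ.restrict Γ).map (dist x) (Ioc 0 ρ) ≤ μ (Γ ∩ closedBall x ρ) := by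
  rw [Measure.map_apply (by fun_prop) measurableSet_Ioc,
    Measure.restrict_apply (measurableSet_Ioc.preimage (by fun_prop))]
  refine measure_mono fun y hy => ⟨hy.2, ?_⟩
  rw [mem_closedBall, dist_comm]
  exact hy.1.2

theorem measure_inter_ball_le_map_dist (hx : μ {x} = 0) (hΓm : MeasurableSet Γ) (ρ : ℝ) :
    μ (Γ ∩ ball x ρ) ≤ (μ.restrict Γ).map (dist x) (Ioo 0 ρ) := by
  rw [Measure.map_apply (by fun_prop) measurableSet_Ioo, Measure.restrict_apply' hΓm,
    ← measure_sdiff_null hx]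
  refine measure_mono fun y ⟨⟨hyΓ, hyρ⟩, hyx⟩ => ⟨⟨dist_pos.2 (Ne.symm hyx), ?_⟩, hyΓ⟩
  rw [mem_ball, dist_comm] at hyρ
  exact hyρ

theorem ae_map_dist_mem_Ioc (hb : Bornology.IsBounded Γ) (hxΓ : x ∈ Γ) (hx : μ {x} = 0)
    (hΓm : MeasurableSet Γ) : ∀ᵐ r ∂(μ.restrict Γ).map (dist x), r ∈ Ioc 0 (diam Γ) := by
  refine (ae_map_iff (p := fun r => r ∈ Ioc 0 (diam Γ)) (by fun_prop) measurableSet_Ioc).2 ?_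
  filter_upwards [ae_restrict_mem hΓm, ae_restrict_of_ae (measure_eq_zero_iff_ae_notMem.1 hx)]
    with y hyΓ hyx
  exact ⟨dist_pos.2 (Ne.symm hyx), dist_le_diam_of_mem hb hxΓ hyΓ⟩

theorem smul_radialMeasure_Ioc_le_map_dist (hd : 0 < d) (hx : μ {x} = 0)
    (hΓm : MeasurableSet Γ)
    (hlower : ∀ r : ℝ, 0 < r → r ≤ 1 → ENNReal.ofReal (c₁ * r ^ d) ≤ μ (Γ ∩ closedBall x r))
    {ρ : ℝ} (hρ : 0 < ρ) :
    (ENNReal.ofReal (c₁ / max 2 (diam Γ) ^ d) • radialMeasure d (diam Γ)) (Ioc 0 ρ) ≤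
      (μ.restrict Γ).map (dist x) (Ioo 0 ρ) :=
  calc (ENNReal.ofReal (c₁ / max 2 (diam Γ) ^ d) • radialMeasure d (diam Γ)) (Ioc 0 ρ)
      ≤ ENNReal.ofReal (c₁ / max 2 (diam Γ) ^ d) * ENNReal.ofReal (min ρ (diam Γ) ^ d) :=
        mul_le_mul_right (radialMeasure_Ioc_le hd diam_nonneg hρ.le) _
    _ = ENNReal.ofReal (c₁ / max 2 (diam Γ) ^ d * min ρ (diam Γ) ^ d) :=
        (ENNReal.ofReal_mul' (Real.rpow_nonneg (le_min hρ.le diam_nonneg) _)).symm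
    _ ≤ μ (Γ ∩ ball x ρ) := le_measure_inter_ball hd hlower hρ
    _ ≤ (μ.restrict Γ).map (dist x) (Ioo 0 ρ) := measure_inter_ball_le_map_dist hx hΓm ρ

theorem map_dist_Ioc_le_smul_radialMeasure (hd : 0 < d) (hb : Bornology.IsBounded Γ)
    (hxΓ : x ∈ Γ) (hx : μ {x} = 0) (hΓfin : μ Γ ≠ ∞)
    (hupper : ∀ r : ℝ, 0 < r → r ≤ 1 → μ (Γ ∩ closedBall x r) ≤ ENNReal.ofReal (c₂ * r ^ d))
    {ρ : ℝ} (hρ : 0 < ρ) :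
    (μ.restrict Γ).map (dist x) (Ioc 0 ρ) ≤
      (ENNReal.ofReal (max c₂ (μ Γ).toReal) • radialMeasure d (diam Γ)) (Ioo 0 ρ) :=
  calc (μ.restrict Γ).map (dist x) (Ioc 0 ρ) ≤ μ (Γ ∩ closedBall x ρ) := map_dist_Ioc_le ρ
    _ ≤ ENNReal.ofReal (max c₂ (μ Γ).toReal * min ρ (diam Γ) ^ d) :=
        measure_inter_closedBall_le hd hb hxΓ hx hΓfin hupper hρ
    _ = (ENNReal.ofReal (max c₂ (μ Γ).toReal) • radialMeasure d (diam Γ)) (Ioo 0 ρ) := by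
        rw [Measure.smul_apply, radialMeasure_Ioo hd diam_nonneg hρ.le, smul_eq_mul,
          ENNReal.ofReal_mul' (Real.rpow_nonneg (le_min hρ.le diam_nonneg) _)]

end DistanceDistribution

theorem stmt_7_general {n : ℕ} (d : ℝ) (hd0 : 0 < d)
    (Γ : Set (EuclideanSpace ℝ (Fin n))) (hΓc : IsCompact Γ)
    (c₁ c₂ : ℝ) (hc₁ : 0 < c₁) (hc₁₂ : c₁ < c₂)
    (hlower : ∀ x ∈ Γ, ∀ r : ℝ, 0 < r → r ≤ 1 →
      ENNReal.ofReal (c₁ * r ^ d) ≤ μH[d] (Γ ∩ Metric.closedBall x r))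
    (hupper : ∀ x ∈ Γ, ∀ r : ℝ, 0 < r → r ≤ 1 →
      μH[d] (Γ ∩ Metric.closedBall x r) ≤ ENNReal.ofReal (c₂ * r ^ d)) :
    ∃ C₁ C₂ : ℝ, 0 < C₁ ∧ C₁ < C₂ ∧
      ∀ x ∈ Γ, ∀ f : ℝ → ℝ,
        (∀ r : ℝ, 0 < r → 0 ≤ f r) → AntitoneOn f (Set.Ioi 0) →
        ContinuousOn f (Set.Ioi 0) →
        (ENNReal.ofReal (C₁ * d) *
            ∫⁻ r in Set.Ioo (0 : ℝ) (Metric.diam Γ), ENNReal.ofReal (r ^ (d - 1) * f r) ≤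
          ∫⁻ y in Γ, ENNReal.ofReal (f (dist x y)) ∂(μH[d])) ∧
        (∫⁻ y in Γ, ENNReal.ofReal (f (dist x y)) ∂(μH[d]) ≤
          ENNReal.ofReal (C₂ * d) *
            ∫⁻ r in Set.Ioo (0 : ℝ) (Metric.diam Γ), ENNReal.ofReal (r ^ (d - 1) * f r)) := by
  have hnull : ∀ x : EuclideanSpace ℝ (Fin n), μH[d] {x} = 0 := hausdorffMeasure_singleton hd0
  have hfin : μH[d] Γ ≠ ∞ := (hΓc.measure_lt_top_of_nhdsWithin fun x hx =>
    ⟨Γ ∩ closedBall x 1, inter_mem_nhdsWithin _ (closedBall_mem_nhds x one_pos),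
      (hupper x hx 1 one_pos le_rfl).trans_lt ENNReal.ofReal_lt_top⟩).ne
  have hM : 1 < max 2 (diam Γ) ^ d :=
    Real.one_lt_rpow (one_lt_two.trans_le (le_max_left _ _)) hd0
  refine ⟨c₁ / max 2 (diam Γ) ^ d, max c₂ (μH[d] Γ).toReal, by positivity,
    (div_lt_self hc₁ hM).trans (hc₁₂.trans_le (le_max_left _ _)),
    fun x hx f hf0 hfa hfc => ?_⟩
  have hπ := ae_map_dist_mem_Ioc hΓc.isBounded hx (hnull x) hΓc.measurableSet
  have hν : ∀ C, 0 ≤ C → ENNReal.ofReal (C * d) *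
      ∫⁻ r in Ioo 0 (diam Γ), ENNReal.ofReal (r ^ (d - 1) * f r) =
        ∫⁻ r, ENNReal.ofReal (f r) ∂(ENNReal.ofReal C • radialMeasure d (diam Γ)) := by
    intro C hC
    rw [lintegral_smul_measure, lintegral_radialMeasure hd0.le, smul_eq_mul, ← mul_assoc,
      ENNReal.ofReal_mul hC]
  rw [hν _ (by positivity), hν _ (le_max_of_le_right ENNReal.toReal_nonneg),
    ← lintegral_map' ((hfc.aemeasurable_of_ae_mem measurableSet_Ioi
      (hπ.mono fun _ hr => hr.1)).ennreal_ofReal) (by fun_prop)]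
  exact ⟨lintegral_ofReal_le_of_antitoneOn
      (Measure.smul_absolutelyContinuous.ae_le ae_radialMeasure_mem_Ioc)
      (hπ.mono fun _ hr => hr.1) hf0 hfa hfc fun ρ hρ =>
        smul_radialMeasure_Ioc_le_map_dist hd0 (hnull x) hΓc.measurableSet (hlower x hx) hρ,
    lintegral_ofReal_le_of_antitoneOn hπ
      (Measure.smul_absolutelyContinuous.ae_le (ae_radialMeasure_mem_Ioc.mono fun _ hr => hr.1))
      hf0 hfa hfc fun ρ hρ => map_dist_Ioc_le_smul_radialMeasure hd0 hΓc.isBounded hx (hnull x) hfin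
        (hupper x hx) hρ⟩

/-- polar-coordinate type comparison on a compact d-set Γ: for a
non-increasing continuous f : (0,∞) → [0,∞), the integral ∫_Γ f(|x−y|) dH^d(y) is
comparable, uniformly in x ∈ Γ and f, to d ∫₀^{diam Γ} r^{d−1} f(r) dr, with constants
depending only on c₁, c₂, n and diam Γ. -/
theorem stmt_7 {n : ℕ} (d : ℝ) (hd0 : 0 < d) (hdn : d ≤ n)
    (Γ : Set (EuclideanSpace ℝ (Fin n))) (hΓc : IsCompact Γ) (hΓne : Γ.Nonempty)
    (c₁ c₂ : ℝ) (hc₁ : 0 < c₁) (hc₁₂ : c₁ < c₂)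
    (hlower : ∀ x ∈ Γ, ∀ r : ℝ, 0 < r → r ≤ 1 →
      ENNReal.ofReal (c₁ * r ^ d) ≤ μH[d] (Γ ∩ Metric.closedBall x r))
    (hupper : ∀ x ∈ Γ, ∀ r : ℝ, 0 < r → r ≤ 1 →
      μH[d] (Γ ∩ Metric.closedBall x r) ≤ ENNReal.ofReal (c₂ * r ^ d)) :
    ∃ C₁ C₂ : ℝ, 0 < C₁ ∧ C₁ < C₂ ∧
      ∀ x ∈ Γ, ∀ f : ℝ → ℝ,
        (∀ r : ℝ, 0 < r → 0 ≤ f r) → AntitoneOn f (Set.Ioi 0) →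
        ContinuousOn f (Set.Ioi 0) →
        (ENNReal.ofReal (C₁ * d) *
            ∫⁻ r in Set.Ioo (0 : ℝ) (Metric.diam Γ), ENNReal.ofReal (r ^ (d - 1) * f r) ≤
          ∫⁻ y in Γ, ENNReal.ofReal (f (dist x y)) ∂(μH[d])) ∧
        (∫⁻ y in Γ, ENNReal.ofReal (f (dist x y)) ∂(μH[d]) ≤
          ENNReal.ofReal (C₂ * d) *
            ∫⁻ r in Set.Ioo (0 : ℝ) (Metric.diam Γ), ENNReal.ofReal (r ^ (d - 1) * f r)) :=
  stmt_7_general d hd0 Γ hΓc c₁ c₂ hc₁ hc₁₂ hlower hupper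
end

section
/- Let H be a Hilbert space, a(·,·) a continuous sesquilinear form on H with |a(u,v)| ≤ C_a‖u‖‖v‖ and coercive with |a(u,u)| ≥ α‖u‖², let F be a bounded antilinear functional on H, let φ ∈ H solve a(φ,ψ) = F(ψ) for all ψ ∈ H, and let V ⊂ H be a closed subspace with φ_V ∈ V solving a(φ_V, ψ) = F(ψ) for all ψ ∈ V. Suppose moreover a satisfies the symmetry a(u,v) = a(conj v, conj u) (conj denoting an antilinear involution preserving V and a's continuity), and let ζ ∈ H solve the auxiliary problem a(ζ,ψ) = G(ψ) for all ψ ∈ H, for another bounded antilinear functional G, with Galerkin solution ζ_V ∈ V. Then |G(conj(φ − φ_V))| ≤ C_a ‖φ − φ_V‖ · ‖ζ − ζ_V‖. -/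
/-! Galerkin orthogonality makes the error `e = φ - φ_V` annihilate `V` under `a`. The symmetry
of `a` under `conj` turns `G (conj e) = a ζ (conj e)` into `a e (conj ζ)`, and since `conj ζ_V ∈ V`
one may replace `ζ` by `ζ - ζ_V` there; continuity of `a` and isometry of `conj` conclude. -/

section

variable {E R : Type*} [AddCommGroup E] [AddCommGroup R]

theorem map_sub_of_map_add (f : E → R) (hf : ∀ x y, f (x + y) = f x + f y) (x y : E) :
    f (x - y) = f x - f y :=
  map_sub (AddMonoidHom.mk' f hf) x y

theorem galerkin_orthogonality {a : E → E → R} (haddl : ∀ u u' v, a (u + u') v = a u v + a u' v)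
    {V : Set E} {F : E → R} {φ φV : E} (hφ : ∀ ψ, a φ ψ = F ψ) (hφV : ∀ ψ ∈ V, a φV ψ = F ψ) :
    ∀ ψ ∈ V, a (φ - φV) ψ = 0 := by
  intro ψ hψ
  rw [map_sub_of_map_add (a · ψ) (fun u u' => haddl u u' ψ), hφ, hφV ψ hψ, sub_self]

theorem apply_conj_eq_of_orthogonal {a : E → E → R}
    (haddr : ∀ u v v', a u (v + v') = a u v + a u v')
    {conj : E → E} (hconjadd : ∀ u v, conj (u + v) = conj u + conj v)
    (hconjinv : ∀ u, conj (conj u) = u) (hsymm : ∀ u v, a u v = a (conj v) (conj u))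
    {V : Set E} (hconjV : ∀ v ∈ V, conj v ∈ V) {G : E → R} {e ζ ζV : E}
    (horth : ∀ ψ ∈ V, a e ψ = 0) (hζ : ∀ ψ, a ζ ψ = G ψ) (hζVmem : ζV ∈ V) :
    G (conj e) = a e (conj (ζ - ζV)) := by
  rw [map_sub_of_map_add conj hconjadd, map_sub_of_map_add (a e) (haddr e),
    horth _ (hconjV ζV hζVmem), sub_zero, ← hζ, hsymm ζ, hconjinv]

end

theorem stmt_15_general {H : Type*} [NormedAddCommGroup H] [NormedSpace ℂ H]
    (a : H → H → ℂ) (Ca : ℝ)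
    (hcont : ∀ u v, ‖a u v‖ ≤ Ca * ‖u‖ * ‖v‖)
    (haddl : ∀ u u' v, a (u + u') v = a u v + a u' v)
    (haddr : ∀ u v v', a u (v + v') = a u v + a u v')
    (conj : H → H)
    (hconjadd : ∀ u v, conj (u + v) = conj u + conj v)
    (hconjinv : ∀ u, conj (conj u) = u)
    (hconjnorm : ∀ u, ‖conj u‖ = ‖u‖)
    (V : Submodule ℂ H)
    (hconjV : ∀ v ∈ V, conj v ∈ V)
    (F G : H → ℂ)
    (φ φV ζ ζV : H) (hζVmem : ζV ∈ V)
    (hφ : ∀ ψ, a φ ψ = F ψ)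
    (hφV : ∀ ψ ∈ V, a φV ψ = F ψ)
    (hζ : ∀ ψ, a ζ ψ = G ψ)
    (hsymm : ∀ u v, a u v = a (conj v) (conj u)) :
    ‖G (conj (φ - φV))‖ ≤ Ca * ‖φ - φV‖ * ‖ζ - ζV‖ := by
  have horth := galerkin_orthogonality (V := V) haddl hφ hφV
  calc ‖G (conj (φ - φV))‖ = ‖a (φ - φV) (conj (ζ - ζV))‖ := by
        rw [apply_conj_eq_of_orthogonal haddr hconjadd hconjinv hsymm hconjV horth hζ hζVmem]
    _ ≤ Ca * ‖φ - φV‖ * ‖conj (ζ - ζV)‖ := hcont _ _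
    _ = Ca * ‖φ - φV‖ * ‖ζ - ζV‖ := by rw [hconjnorm]

/-- abstract Aubin–Nitsche / superconvergence duality estimate:
with a continuous coercive sesquilinear form a on H, a conjugation conj preserving a
closed subspace V, Galerkin solutions φ_V, ζ_V in V of the primal and dual problems,
and the symmetry a(u,v) = a(conj v, conj u), one has
|G(conj(φ − φ_V))| ≤ C_a ‖φ − φ_V‖ ‖ζ − ζ_V‖. -/
theorem stmt_15 {H : Type*} [NormedAddCommGroup H] [NormedSpace ℂ H]
    (a : H → H → ℂ) (Ca αc : ℝ) (hCa : 0 < Ca) (hαc : 0 < αc)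
    (hcont : ∀ u v, ‖a u v‖ ≤ Ca * ‖u‖ * ‖v‖)
    (hcoer : ∀ u, αc * ‖u‖ ^ 2 ≤ ‖a u u‖)
    (haddl : ∀ u u' v, a (u + u') v = a u v + a u' v)
    (haddr : ∀ u v v', a u (v + v') = a u v + a u v')
    (hsmull : ∀ (c : ℂ) u v, a (c • u) v = c * a u v)
    (hsmulr : ∀ (c : ℂ) u v, a u (c • v) = (starRingEnd ℂ) c * a u v)
    (conj : H → H)
    (hconjadd : ∀ u v, conj (u + v) = conj u + conj v)
    (hconjsmul : ∀ (c : ℂ) u, conj (c • u) = (starRingEnd ℂ) c • conj u)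
    (hconjinv : ∀ u, conj (conj u) = u)
    (hconjnorm : ∀ u, ‖conj u‖ = ‖u‖)
    (V : Submodule ℂ H) (hVclosed : IsClosed (V : Set H))
    (hconjV : ∀ v ∈ V, conj v ∈ V)
    (F G : H → ℂ) (CF CG : ℝ)
    (hFadd : ∀ u v, F (u + v) = F u + F v)
    (hFsmul : ∀ (c : ℂ) u, F (c • u) = (starRingEnd ℂ) c * F u)
    (hFbdd : ∀ u, ‖F u‖ ≤ CF * ‖u‖)
    (hGadd : ∀ u v, G (u + v) = G u + G v)
    (hGsmul : ∀ (c : ℂ) u, G (c • u) = (starRingEnd ℂ) c * G u)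
    (hGbdd : ∀ u, ‖G u‖ ≤ CG * ‖u‖)
    (φ φV ζ ζV : H) (hφVmem : φV ∈ V) (hζVmem : ζV ∈ V)
    (hφ : ∀ ψ, a φ ψ = F ψ)
    (hφV : ∀ ψ ∈ V, a φV ψ = F ψ)
    (hζ : ∀ ψ, a ζ ψ = G ψ)
    (hζV : ∀ ψ ∈ V, a ζV ψ = G ψ)
    (hsymm : ∀ u v, a u v = a (conj v) (conj u)) :
    ‖G (conj (φ - φV))‖ ≤ Ca * ‖φ - φV‖ * ‖ζ - ζV‖ :=
  stmt_15_general a Ca hcont haddl haddr conj hconjadd hconjinv hconjnorm V hconjV F G φ φV ζ ζV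
    hζVmem hφ hφV hζ hsymm
end
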